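/- arXiv:1511.07568 — 6 statements merged into one kernel-verified Lean document; each statement's English description precedes it below -/
import Mathlib

section
/- More generally: given a nonincreasing nonnegative vector z ∈ ℝ^K and τ ≤ K, the vector x with x_i = (∑_{n=1}^K z_n)/τ for i ≤ τ and x_i = 0 otherwise majorizes z if and only if z_1 ≤ (∑_{n=1}^K z_n)/τ. -/
open Finset

lemma card_filter_val_lt (K t : ℕ) (h : t ≤ K) :
    (Finset.univ.filter fun n : Fin K => (n : ℕ) < t).card = t := by
  rcases lt_or_eq_of_le h with h' | h'
  · have : (Finset.univ.filter fun n : Fin K => (n : ℕ) < t) = Finset.Iio ⟨t, h'⟩ := by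
      ext n; simp [Fin.lt_def]
    rw [this, Fin.card_Iio]
  · have : (Finset.univ.filter fun n : Fin K => (n : ℕ) < t) = Finset.univ := by
      apply Finset.filter_true_of_mem
      intro n _
      have := n.isLt; omega
    rw [this, Finset.card_univ, Fintype.card_fin, h']

theorem flat_majorization_iff (K τ : ℕ) (hK : 0 < K) (hτ : 0 < τ) (hτK : τ ≤ K)
    (z : Fin K → ℝ) (hnonneg : ∀ k, 0 ≤ z k)
    (hdec : ∀ j k : Fin K, j ≤ k → z k ≤ z j)
    (x : Fin K → ℝ)
    (hx : ∀ i : Fin K, x i = if (i : ℕ) < τ then (∑ n, z n) / τ else 0) :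
    ((∀ m : ℕ, m ≤ K →
        ∑ n ∈ Finset.univ.filter (fun n : Fin K => (n : ℕ) < m), z n ≤
          ∑ n ∈ Finset.univ.filter (fun n : Fin K => (n : ℕ) < m), x n) ∧
      ∑ n, x n = ∑ n, z n) ↔
    z ⟨0, hK⟩ ≤ (∑ n, z n) / τ := by
  set S : ℝ := ∑ n, z n with hS
  set c : ℝ := S / τ with hc
  have hτ0 : (τ : ℝ) ≠ 0 := Nat.cast_ne_zero.mpr hτ.ne'
  -- sum of x over an initial segment
  have hxsum : ∀ m : ℕ, m ≤ K →
      ∑ n ∈ Finset.univ.filter (fun n : Fin K => (n : ℕ) < m), x n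
        = (min m τ : ℕ) * c := by
    intro m hm
    have h1 : ∑ n ∈ Finset.univ.filter (fun n : Fin K => (n : ℕ) < m), x n
        = ∑ n ∈ Finset.univ.filter (fun n : Fin K => (n : ℕ) < m),
            (if (n : ℕ) < τ then c else 0) := by
      exact Finset.sum_congr rfl fun n _ => hx n
    rw [h1, ← Finset.sum_filter, Finset.filter_filter]
    have h2 : (Finset.univ.filter fun n : Fin K => (n : ℕ) < m ∧ (n : ℕ) < τ)
        = Finset.univ.filter fun n : Fin K => (n : ℕ) < min m τ := by
      ext n; simp [Nat.lt_min]
    rw [h2, Finset.sum_const, card_filter_val_lt K (min m τ) (le_trans (min_le_left _ _) hm)]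
    simp [nsmul_eq_mul]
  -- total sum of x
  have hxtot : ∑ n, x n = S := by
    have h1 : ∑ n, x n = ∑ n ∈ Finset.univ.filter (fun n : Fin K => (n : ℕ) < K), x n := by
      apply Finset.sum_congr _ fun n _ => rfl
      symm; apply Finset.filter_true_of_mem; intro n _; exact n.isLt
    rw [h1, hxsum K le_rfl, min_eq_right hτK, hc]
    field_simp
  constructor
  · rintro ⟨hmaj, _⟩
    have h1 := hmaj 1 hK
    have hfil : (Finset.univ.filter fun n : Fin K => (n : ℕ) < 1) = {⟨0, hK⟩} := by
      ext n
      simp [Nat.lt_one_iff, Fin.ext_iff]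
    rw [hxsum 1 hK, hfil, Finset.sum_singleton, min_eq_left hτ] at h1
    simpa using h1
  · intro hz0
    constructor
    · intro m hm
      rw [hxsum m hm]
      rcases le_total m τ with hmτ | hτm
      · rw [min_eq_left hmτ]
        calc ∑ n ∈ Finset.univ.filter (fun n : Fin K => (n : ℕ) < m), z n
            ≤ ∑ n ∈ Finset.univ.filter (fun n : Fin K => (n : ℕ) < m), z ⟨0, hK⟩ := by
              apply Finset.sum_le_sum
              intro n _
              exact hdec ⟨0, hK⟩ n (by simp [Fin.le_def])
          _ = (m : ℝ) * z ⟨0, hK⟩ := by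
              rw [Finset.sum_const, card_filter_val_lt K m hm, nsmul_eq_mul]
          _ ≤ (m : ℝ) * c := by
              apply mul_le_mul_of_nonneg_left hz0 (by positivity)
      · rw [min_eq_right hτm]
        have : (τ : ℝ) * c = S := by rw [hc]; field_simp
        rw [this]
        apply Finset.sum_le_sum_of_subset_of_nonneg (Finset.filter_subset _ _)
        intro n _ _; exact hnonneg n
    · rw [hxtot]
end

section
/- If x ∈ ℝ^K majorizes z ∈ ℝ^K (both sorted in decreasing order with equal sums), then z can be obtained from x by at most K−1 T-transforms, i.e., z = T_{K-1} T_{K-2} ⋯ T_1 x, where each T_i is a matrix of the form T = (1−ξ)I + ξΠ for some ξ ∈ [0,1] and some transposition permutation matrix Π. -/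
open Finset

/-- A T-transform on `ℝ^K`: a matrix of the form `(1-ξ) • I + ξ • Π` where `Π` is the
permutation matrix of a transposition and `ξ ∈ [0,1]`. -/
def IsTTransform {K : ℕ} (T : Matrix (Fin K) (Fin K) ℝ) : Prop :=
  ∃ (ξ : ℝ) (i j : Fin K), 0 ≤ ξ ∧ ξ ≤ 1 ∧ i ≠ j ∧
    T = (1 - ξ) • (1 : Matrix (Fin K) (Fin K) ℝ) + ξ • (Equiv.swap i j).permMatrix ℝ

lemma permMatrix_mulVec {K : ℕ} (σ : Equiv.Perm (Fin K)) (x : Fin K → ℝ) (i : Fin K) :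
    (σ.permMatrix ℝ).mulVec x i = x (σ i) := by
  simp [Equiv.Perm.permMatrix, Matrix.mulVec, dotProduct, PEquiv.toMatrix,
    Equiv.toPEquiv, Finset.sum_ite_eq]

lemma succ_filter_eq {K : ℕ} (m : Fin K) :
    Finset.univ.filter (fun n : Fin K => (n : ℕ) < (m : ℕ) + 1) =
      insert m (Finset.univ.filter (fun n : Fin K => (n : ℕ) < (m : ℕ))) := by
  ext n
  simp only [Finset.mem_filter, Finset.mem_univ, true_and, Finset.mem_insert,
    Nat.lt_succ_iff, le_iff_lt_or_eq, ← Fin.val_eq_val]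
  tauto

lemma aux_Ttrans {K : ℕ} (z : Fin K → ℝ)
    (hzdec : ∀ i j : Fin K, i ≤ j → z j ≤ z i) :
    ∀ d : ℕ, ∀ x : Fin K → ℝ,
      (∀ i j : Fin K, i ≤ j → x j ≤ x i) →
      (∀ m : ℕ, m < K →
        ∑ n ∈ Finset.univ.filter (fun n : Fin K => (n : ℕ) < m), z n ≤
          ∑ n ∈ Finset.univ.filter (fun n : Fin K => (n : ℕ) < m), x n) →
      (∑ n, x n = ∑ n, z n) →
      ((Finset.univ.filter (fun i => x i ≠ z i)).card ≤ d) →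
      ∃ l : List (Matrix (Fin K) (Fin K) ℝ),
        l.length ≤ d - 1 ∧ (∀ T ∈ l, IsTTransform T) ∧ z = l.prod.mulVec x := by
  intro d
  induction d with
  | zero =>
    intro x hxdec hmaj hsum hc
    refine ⟨[], by simp, by simp, ?_⟩
    have hD : (Finset.univ.filter (fun i => x i ≠ z i)) = ∅ :=
      Finset.card_eq_zero.mp (Nat.le_zero.mp hc)
    have hxz : ∀ i, x i = z i := by
      intro i
      by_contra h
      have : i ∈ (Finset.univ.filter (fun i => x i ≠ z i)) := by simp [h]
      simp [hD] at this
    funext i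
    simp [Matrix.one_mulVec, hxz i]
  | succ d ih =>
    intro x hxdec hmaj hsum hc
    by_cases hxz : ∀ i, x i = z i
    · refine ⟨[], by simp, by simp, ?_⟩
      funext i
      simp [Matrix.one_mulVec, hxz i]
    push_neg at hxz
    obtain ⟨i₀, hi₀⟩ := hxz
    have hzero : ∑ i, (x i - z i) = 0 := by
      rw [Finset.sum_sub_distrib]; linarith
    -- the set of indices where x > z is nonempty
    have hSne : (Finset.univ.filter (fun i => z i < x i)).Nonempty := by
      by_contra h
      rw [Finset.not_nonempty_iff_eq_empty] at h
      have hle : ∀ i : Fin K, x i ≤ z i := by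
        intro i
        by_contra hi
        have : i ∈ Finset.univ.filter (fun i => z i < x i) := by
          simp [lt_of_not_ge hi]
        simp [h] at this
      have : ∑ i, x i < ∑ i, z i :=
        Finset.sum_lt_sum (fun i _ => hle i) ⟨i₀, Finset.mem_univ _, lt_of_le_of_ne (hle i₀) hi₀⟩
      linarith
    set S := Finset.univ.filter (fun i => z i < x i) with hSdef
    set j := S.max' hSne with hjdef
    have hjS : j ∈ S := S.max'_mem hSne
    have hj : z j < x j := by simpa [hSdef] using hjS
    have hjmax : ∀ i : Fin K, z i < x i → i ≤ j := by
      intro i hi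
      exact S.le_max' i (by simp [hSdef, hi])
    have hjK : (j : ℕ) < K := j.isLt
    -- prefix sum strictly below j is nonnegative
    have hprefj : 0 ≤ ∑ n ∈ Finset.univ.filter (fun n : Fin K => (n : ℕ) < (j : ℕ)), (x n - z n) := by
      have := hmaj (j : ℕ) hjK
      rw [Finset.sum_sub_distrib]
      linarith
    have hjnot : j ∉ Finset.univ.filter (fun n : Fin K => (n : ℕ) < (j : ℕ)) := by simp
    -- the set of indices above j where x < z is nonempty
    have hKne : (Finset.univ.filter (fun i => j < i ∧ x i < z i)).Nonempty := by
      by_contra h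
      rw [Finset.not_nonempty_iff_eq_empty] at h
      have heq : ∀ i : Fin K, ¬ ((i : ℕ) < (j : ℕ) + 1) → x i - z i = 0 := by
        intro i hi
        have hji : j < i := by
          rw [Fin.lt_def]; omega
        have h1 : ¬ (x i < z i) := by
          intro hlt
          have : i ∈ Finset.univ.filter (fun i => j < i ∧ x i < z i) := by simp [hji, hlt]
          simp [h] at this
        have h2 : ¬ (z i < x i) := fun hlt => absurd (hjmax i hlt) (not_le.mpr hji)
        linarith [lt_or_ge (x i) (z i), not_lt.mp h1, not_lt.mp h2]
      have hsplit := Finset.sum_filter_add_sum_filter_not Finset.univ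
        (fun n : Fin K => (n : ℕ) < (j : ℕ) + 1) (fun n => x n - z n)
      have hzero2 : ∑ n ∈ Finset.univ.filter (fun n : Fin K => ¬ ((n : ℕ) < (j : ℕ) + 1)),
          (x n - z n) = 0 :=
        Finset.sum_eq_zero (fun n hn => heq n (by simpa using (Finset.mem_filter.mp hn).2))
      have h1 : ∑ n ∈ Finset.univ.filter (fun n : Fin K => (n : ℕ) < (j : ℕ) + 1),
          (x n - z n) = 0 := by
        rw [hzero] at hsplit; linarith
      rw [succ_filter_eq j, Finset.sum_insert hjnot] at h1
      linarith
    set Ks := Finset.univ.filter (fun i => j < i ∧ x i < z i) with hKsdef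
    set k := Ks.min' hKne with hkdef
    have hkKs : k ∈ Ks := Ks.min'_mem hKne
    have hjk : j < k := by simpa [hKsdef] using (Finset.mem_filter.mp hkKs).2.1
    have hk : x k < z k := by simpa [hKsdef] using (Finset.mem_filter.mp hkKs).2.2
    have hkmin : ∀ i : Fin K, j < i → x i < z i → k ≤ i := by
      intro i h1 h2
      exact Ks.min'_le i (by simp [hKsdef, h1, h2])
    have hmid : ∀ i : Fin K, j < i → i < k → x i = z i := by
      intro i h1 h2
      rcases lt_trichotomy (x i) (z i) with h | h | h
      · exact absurd (hkmin i h1 h) (not_le.mpr h2)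
      · exact h
      · exact absurd (hjmax i h) (not_le.mpr h1)
    have hjkne : j ≠ k := ne_of_lt hjk
    have hzjk : z k ≤ z j := hzdec j k (le_of_lt hjk)
    set δ : ℝ := min (x j - z j) (z k - x k) with hδdef
    have hδa : δ ≤ x j - z j := min_le_left _ _
    have hδb : δ ≤ z k - x k := min_le_right _ _
    have hδpos : 0 < δ := lt_min (by linarith) (by linarith)
    have hxjk : x k < x j := by linarith
    have hδle : δ ≤ x j - x k := by linarith
    set ξ : ℝ := δ / (x j - x k) with hξdef
    have hξ0 : 0 ≤ ξ := div_nonneg (le_of_lt hδpos) (by linarith)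
    have hξ1 : ξ ≤ 1 := (div_le_one (by linarith)).mpr hδle
    have hne0 : x j - x k ≠ 0 := ne_of_gt (by linarith)
    have hξδ : ξ * (x j - x k) = δ := div_mul_cancel₀ _ hne0
    set T : Matrix (Fin K) (Fin K) ℝ :=
      (1 - ξ) • (1 : Matrix (Fin K) (Fin K) ℝ) + ξ • (Equiv.swap j k).permMatrix ℝ with hTdef
    set x' : Fin K → ℝ := fun i => if i = j then x j - δ else if i = k then x k + δ else x i
      with hx'def
    have hx'j : x' j = x j - δ := by simp [hx'def]
    have hx'k : x' k = x k + δ := by simp [hx'def, (Ne.symm hjkne)]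
    have hx'o : ∀ i, i ≠ j → i ≠ k → x' i = x i := by
      intro i h1 h2; simp [hx'def, h1, h2]
    have hT : T.mulVec x = x' := by
      funext i
      have : T.mulVec x i = (1 - ξ) * x i + ξ * x (Equiv.swap j k i) := by
        simp [hTdef, Matrix.add_mulVec, Matrix.smul_mulVec, Matrix.one_mulVec,
          permMatrix_mulVec, Pi.smul_apply, smul_eq_mul]
      rw [this]
      by_cases h1 : i = j
      · subst h1
        rw [Equiv.swap_apply_left, hx'j, hξdef]; field_simp; ring
      by_cases h2 : i = k
      · subst h2
        rw [Equiv.swap_apply_right, hx'k, hξdef]; field_simp; ring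
      · rw [Equiv.swap_apply_of_ne_of_ne h1 h2, hx'o i h1 h2]; ring
    -- pointwise description of x' for sums
    have hdiff : ∀ s : Finset (Fin K), ∑ n ∈ s, x' n =
        ∑ n ∈ s, x n + (if k ∈ s then δ else 0) - (if j ∈ s then δ else 0) := by
      intro s
      have hpt : ∀ n ∈ s, x' n = x n + (if n = k then δ else 0) - (if n = j then δ else 0) := by
        intro n _
        by_cases h1 : n = j
        · subst h1; simp [hx'j, hjkne]
        by_cases h2 : n = k
        · subst h2; simp [hx'k, h1]
        · simp [hx'o n h1 h2, h1, h2]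
      rw [Finset.sum_congr rfl hpt, Finset.sum_sub_distrib, Finset.sum_add_distrib,
        Finset.sum_ite_eq' s k (fun _ => δ), Finset.sum_ite_eq' s j (fun _ => δ)]
    -- x' is decreasing
    have hx'jz : z j ≤ x' j := by rw [hx'j]; linarith
    have hx'kz : x' k ≤ z k := by rw [hx'k]; linarith
    have hx'dec : ∀ i i' : Fin K, i ≤ i' → x' i' ≤ x' i := by
      intro i i' hii'
      by_cases h1 : i = j
      · subst h1
        by_cases h2 : i' = j
        · subst h2; exact le_refl _
        by_cases h3 : i' = k
        · subst h3; linarith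
        · rw [hx'o i' h2 h3]
          rcases lt_or_ge i' k with h4 | h4
          · have h5 : j < i' := lt_of_le_of_ne hii' (fun h => h2 h.symm)
            rw [hmid i' h5 h4]
            have := hzdec j i' hii'
            linarith
          · have := hxdec k i' h4
            linarith
      by_cases h1' : i = k
      · subst h1'
        by_cases h2 : i' = k
        · subst h2; exact le_refl _
        have h3 : i' ≠ j := by
          intro h; subst h; exact absurd hii' (not_le.mpr hjk)
        have hki' : k ≤ i' := hii'
        rw [hx'o i' h3 h2, hx'k]
        have := hxdec k i' hki'
        linarith
      -- i ∉ {j, k}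
      rw [hx'o i h1 h1']
      by_cases h2 : i' = j
      · subst h2
        rw [hx'j]
        have := hxdec i j hii'
        linarith
      by_cases h3 : i' = k
      · subst h3
        rw [hx'k]
        rcases lt_or_ge i j with h4 | h4
        · have := hxdec i j (le_of_lt h4)
          linarith
        · have h5 : j < i := lt_of_le_of_ne h4 (fun h => h1 h.symm)
          have h6 : i < k := lt_of_le_of_ne hii' h1'
          rw [hmid i h5 h6]
          have := hzdec i k (le_of_lt h6)
          linarith
      · rw [hx'o i' h2 h3]
        exact hxdec i i' hii'
    -- sum of x' equals sum of z
    have hsum' : ∑ n, x' n = ∑ n, z n := by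
      rw [hdiff Finset.univ]
      simp [hsum]
    -- x' majorizes z
    have hmaj' : ∀ m : ℕ, m < K →
        ∑ n ∈ Finset.univ.filter (fun n : Fin K => (n : ℕ) < m), z n ≤
          ∑ n ∈ Finset.univ.filter (fun n : Fin K => (n : ℕ) < m), x' n := by
      intro m hm
      set s := Finset.univ.filter (fun n : Fin K => (n : ℕ) < m) with hsdef
      rw [hdiff s]
      by_cases hjs : (j : ℕ) < m
      · by_cases hks : (k : ℕ) < m
        · rw [if_pos (by simp [hsdef, hks]), if_pos (by simp [hsdef, hjs])]
          have := hmaj m hm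
          linarith
        · rw [if_neg (by simp [hsdef, hks]), if_pos (by simp [hsdef, hjs])]
          -- need δ ≤ ∑_{s} (x - z)
          have hmk : m ≤ (k : ℕ) := le_of_not_gt hks
          have hsub1 : Finset.univ.filter (fun n : Fin K => (n : ℕ) < (j : ℕ) + 1) ⊆ s := by
            intro n hn
            simp only [hsdef, Finset.mem_filter, Finset.mem_univ, true_and] at hn ⊢
            exact lt_of_lt_of_le hn (Nat.succ_le_of_lt hjs)
          have hzr : ∀ n ∈ s, n ∉ Finset.univ.filter (fun n : Fin K => (n : ℕ) < (j : ℕ) + 1) →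
              x n - z n = 0 := by
            intro n hn hn'
            simp only [hsdef, Finset.mem_filter, Finset.mem_univ, true_and] at hn hn'
            have h1 : j < n := by rw [Fin.lt_def]; omega
            have h2 : n < k := by rw [Fin.lt_def]; omega
            rw [hmid n h1 h2]; ring
          have heqs : ∑ n ∈ Finset.univ.filter (fun n : Fin K => (n : ℕ) < (j : ℕ) + 1),
              (x n - z n) = ∑ n ∈ s, (x n - z n) := Finset.sum_subset hsub1 hzr
          rw [succ_filter_eq j, Finset.sum_insert hjnot] at heqs
          have : δ ≤ ∑ n ∈ s, (x n - z n) := by linarith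
          rw [Finset.sum_sub_distrib] at this
          linarith
      · have hks : ¬ ((k : ℕ) < m) := by
          have := hjk
          rw [Fin.lt_def] at this
          omega
        rw [if_neg (by simp [hsdef, hks]), if_neg (by simp [hsdef, hjs])]
        have := hmaj m hm
        linarith
    -- cardinality decreases
    have hjD : j ∈ Finset.univ.filter (fun i => x i ≠ z i) := by
      simp [ne_of_gt hj]
    have hkD : k ∈ Finset.univ.filter (fun i => x i ≠ z i) := by
      simp [ne_of_lt hk]
    have hDcard : 1 < (Finset.univ.filter (fun i => x i ≠ z i)).card :=
      Finset.one_lt_card.mpr ⟨j, hjD, k, hkD, hjkne⟩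
    have hd1 : 1 ≤ d := by omega
    set w : Fin K := if x j - z j ≤ z k - x k then j else k with hwdef
    have hwD : w ∈ Finset.univ.filter (fun i => x i ≠ z i) := by
      rw [hwdef]; split <;> assumption
    have hx'w : x' w = z w := by
      rw [hwdef]
      split
      · rename_i h
        rw [hx'j, hδdef, min_eq_left h]; ring
      · rename_i h
        rw [hx'k, hδdef, min_eq_right (le_of_not_ge h)]; ring
    have hsubD : Finset.univ.filter (fun i => x' i ≠ z i) ⊆
        (Finset.univ.filter (fun i => x i ≠ z i)).erase w := by
      intro i hi
      simp only [Finset.mem_filter, Finset.mem_univ, true_and] at hi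
      rw [Finset.mem_erase]
      constructor
      · intro h; subst h; exact hi hx'w
      · simp only [Finset.mem_filter, Finset.mem_univ, true_and]
        by_cases h1 : i = j
        · subst h1; exact ne_of_gt hj
        by_cases h2 : i = k
        · subst h2; exact ne_of_lt hk
        · rwa [hx'o i h1 h2] at hi
    have hcard' : (Finset.univ.filter (fun i => x' i ≠ z i)).card ≤ d := by
      calc (Finset.univ.filter (fun i => x' i ≠ z i)).card
          ≤ ((Finset.univ.filter (fun i => x i ≠ z i)).erase w).card := Finset.card_le_card hsubD
        _ = (Finset.univ.filter (fun i => x i ≠ z i)).card - 1 :=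
            Finset.card_erase_of_mem hwD
        _ ≤ d := by omega
    obtain ⟨l, hl1, hl2, hl3⟩ := ih x' hx'dec hmaj' hsum' hcard'
    refine ⟨l ++ [T], ?_, ?_, ?_⟩
    · simp only [List.length_append, List.length_singleton]
      omega
    · intro M hM
      rcases List.mem_append.mp hM with h | h
      · exact hl2 M h
      · rw [List.mem_singleton] at h
        subst h
        exact ⟨ξ, j, k, hξ0, hξ1, hjkne, hTdef⟩
    · rw [List.prod_append, List.prod_singleton, ← Matrix.mulVec_mulVec, hT]
      exact hl3

theorem majorization_via_T_transforms (K : ℕ) (hK : 0 < K)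
    (x z : Fin K → ℝ)
    (hxdec : ∀ i j : Fin K, i ≤ j → x j ≤ x i)
    (hzdec : ∀ i j : Fin K, i ≤ j → z j ≤ z i)
    (hmaj : ∀ m : ℕ, m < K →
      ∑ n ∈ Finset.univ.filter (fun n : Fin K => (n : ℕ) < m), z n ≤
        ∑ n ∈ Finset.univ.filter (fun n : Fin K => (n : ℕ) < m), x n)
    (hsum : ∑ n, x n = ∑ n, z n) :
    ∃ l : List (Matrix (Fin K) (Fin K) ℝ),
      l.length ≤ K - 1 ∧ (∀ T ∈ l, IsTTransform T) ∧ z = l.prod.mulVec x := by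
  have hcard : (Finset.univ.filter (fun i => x i ≠ z i)).card ≤ K := by
    calc (Finset.univ.filter (fun i => x i ≠ z i)).card ≤ Finset.univ.card :=
        Finset.card_filter_le _ _
      _ = K := by simp
  exact aux_Ttrans z hzdec K x hxdec hmaj hsum hcard
end

section
/- Under the GWBE property S Z S^T = B I_τ with z_k = γ̂_k/(1+γ̂_k), B = (∑_k z_k)/τ, and downlink powers P_k = α_k γ̂_k/(1+γ̂_k) with α_k > 0, the asymptotic SINR θ_k = P_k / ( (α_k/τ)·∑_{j} P_j/α_j − P_k ) satisfies θ_k ≥ γ̂_k for all k, provided ∑_j γ̂_j/(1+γ̂_j) ≤ τ and the denominator is positive. -/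
open Finset Matrix

theorem gwbe_sinr_targets_met (K τ : ℕ) (hτ : 0 < τ) (hτK : τ < K)
    (γhat : Fin K → ℝ) (hγ : ∀ k, 0 < γhat k)
    (α : Fin K → ℝ) (hα : ∀ k, 0 < α k)
    (z : Fin K → ℝ) (hz : ∀ k, z k = γhat k / (1 + γhat k))
    (B : ℝ) (hB : B = (∑ k, z k) / τ)
    (S : Matrix (Fin τ) (Fin K) ℝ)
    (hgwbe : S * Matrix.diagonal z * Sᵀ = B • (1 : Matrix (Fin τ) (Fin τ) ℝ))
    (P : Fin K → ℝ) (hP : ∀ k, P k = α k * γhat k / (1 + γhat k))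
    (hbw : ∑ j, γhat j / (1 + γhat j) ≤ τ)
    (hden : ∀ k, 0 < (α k / τ) * (∑ j, P j / α j) - P k)
    (θ : Fin K → ℝ)
    (hθ : ∀ k, θ k = P k / ((α k / τ) * (∑ j, P j / α j) - P k)) :
    ∀ k, γhat k ≤ θ k := by
  intro k
  rw [hθ, le_div_iff₀ (hden k)]
  have hsum : (∑ j, P j / α j) = ∑ j, γhat j / (1 + γhat j) := by
    refine Finset.sum_congr rfl fun j _ => ?_
    rw [hP j]
    rw [mul_div_assoc, mul_div_cancel_left₀ _ (ne_of_gt (hα j))]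
  have hpos : 0 < 1 + γhat k := by linarith [hγ k]
  have h1 : (α k / τ) * (∑ j, P j / α j) ≤ α k := by
    rw [hsum]
    rw [div_mul_eq_mul_div, div_le_iff₀ (by exact_mod_cast hτ)]
    have := mul_le_mul_of_nonneg_left hbw (le_of_lt (hα k))
    linarith
  have hPk : P k = α k * γhat k / (1 + γhat k) := hP k
  have key : γhat k * (α k - P k) = P k := by
    rw [hPk]; field_simp; ring
  have h2 : γhat k * ((α k / τ) * (∑ j, P j / α j) - P k)
      ≤ γhat k * (α k - P k) := by
    apply mul_le_mul_of_nonneg_left _ (le_of_lt (hγ k))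
    linarith
  linarith [key, h2]
end

section
/- For any invertible diagonal matrix Z and symmetric matrix R_S with unit diagonal, tr(Z^{-1} R_S Z R_S) = K + ∑_{p>q} ( (ζ_q/ζ_p) + (ζ_p/ζ_q) ) ρ_{pq}², which is ≥ K + 2∑_{p>q} ρ_{pq}² = tr(R_S R_S), where ζ_p are the diagonal entries of Z and ρ_{pq} the off-diagonal entries of R_S. -/
/-!
Expanding the trace, `tr(Z⁻¹ R Z R) = ∑_{p,q} (ζ_q / ζ_p) ρ_pq ρ_qp`. The diagonal terms contribute
`K` because `ρ_pp = 1`, and by symmetry the terms `(p, q)` and `(q, p)` pair up to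
`(ζ_q / ζ_p + ζ_p / ζ_q) ρ_pq²`. Since `t + 1/t ≥ 2`, this is bounded below by the same expansion
with all weights equal to `1`, which is `tr(R R)`.
-/

open Finset Matrix

theorem Finset.sum_sum_eq_sum_diag_add_sum_lt {ι M : Type*} [Fintype ι] [LinearOrder ι]
    [AddCommMonoid M] (g : ι → ι → M) :
    ∑ p, ∑ q, g p q = ∑ p, g p p + ∑ p, ∑ q ∈ univ.filter (· < p), (g p q + g q p) := by
  have trichotomy : ∀ p q, g p q = (if q < p then g p q else 0) + (if p = q then g p q else 0)
      + (if p < q then g p q else 0) := by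
    intro p q
    rcases lt_trichotomy p q with h | rfl | h
    · simp [h, h.ne, h.not_gt]
    · simp
    · simp [h, h.ne', h.not_gt]
  have upper_eq_lower : ∑ p, ∑ q ∈ univ.filter (p < ·), g p q
      = ∑ p, ∑ q ∈ univ.filter (· < p), g q p :=
    sum_comm' (by simp)
  calc ∑ p, ∑ q, g p q
      = ∑ p, ∑ q, ((if q < p then g p q else 0) + (if p = q then g p q else 0)
          + (if p < q then g p q else 0)) :=
        sum_congr rfl fun p _ => sum_congr rfl fun q _ => trichotomy p q
    _ = _ := by
      simp only [sum_add_distrib, sum_ite_eq, mem_univ, if_true]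
      simp only [← sum_filter, upper_eq_lower]
      abel

theorem Matrix.trace_diagonal_mul_mul_diagonal_mul {n α : Type*} [Fintype n] [DecidableEq n]
    [CommSemiring α] (v w : n → α) (A B : Matrix n n α) :
    trace (diagonal v * A * diagonal w * B) = ∑ p, ∑ q, v p * w q * (A p q * B q p) := by
  simp only [trace, diag, mul_apply (M := diagonal v * A * diagonal w), mul_diagonal,
    diagonal_mul]
  exact sum_congr rfl fun p _ => sum_congr rfl fun q _ => by ring

theorem Matrix.inv_diagonal_of_ne_zero {n K : Type*} [Fintype n] [DecidableEq n] [Field K]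
    {v : n → K} (hv : ∀ i, v i ≠ 0) : (diagonal v)⁻¹ = diagonal v⁻¹ :=
  inv_eq_left_inv <| by
    rw [diagonal_mul_diagonal, ← diagonal_one]
    exact congrArg diagonal (funext fun i => inv_mul_cancel₀ (hv i))

theorem Matrix.IsSymm.sum_weight_mul_mul_eq {ι α : Type*} [Fintype ι] [LinearOrder ι]
    [CommRing α] {R : Matrix ι ι α} (hR : R.IsSymm) (hdiag : ∀ p, R p p = 1)
    {w : ι → ι → α} (hw : ∀ p, w p p = 1) :
    ∑ p, ∑ q, w p q * (R p q * R q p) =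
      Fintype.card ι + ∑ p, ∑ q ∈ univ.filter (· < p), (w p q + w q p) * R p q ^ 2 := by
  rw [sum_sum_eq_sum_diag_add_sum_lt]
  simp only [hdiag, hw, hR.apply, sum_const, card_univ, nsmul_eq_mul, mul_one, sq, add_mul]

theorem two_le_div_add_div {a b : ℝ} (ha : 0 < a) (hb : 0 < b) : 2 ≤ a / b + b / a := by
  rw [div_add_div _ _ hb.ne' ha.ne', le_div_iff₀ (by positivity)]
  nlinarith [sq_nonneg (a - b)]

theorem trace_conj_correlation_general (K : ℕ)
    (ζ : Fin K → ℝ) (hζ : ∀ p, 0 < ζ p)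
    (R : Matrix (Fin K) (Fin K) ℝ) (hsymm : R.IsSymm)
    (hdiag : ∀ p, R p p = 1) :
    Matrix.trace ((Matrix.diagonal ζ)⁻¹ * R * Matrix.diagonal ζ * R) =
      (K : ℝ) + ∑ p, ∑ q ∈ Finset.univ.filter (fun q : Fin K => q < p),
        (ζ q / ζ p + ζ p / ζ q) * (R p q) ^ 2 ∧
    Matrix.trace ((Matrix.diagonal ζ)⁻¹ * R * Matrix.diagonal ζ * R) ≥
      (K : ℝ) + ∑ p, ∑ q ∈ Finset.univ.filter (fun q : Fin K => q < p),
        2 * (R p q) ^ 2 ∧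
    (K : ℝ) + ∑ p, ∑ q ∈ Finset.univ.filter (fun q : Fin K => q < p),
        2 * (R p q) ^ 2 = Matrix.trace (R * R) := by
  have trace_conj : trace ((diagonal ζ)⁻¹ * R * diagonal ζ * R) =
      K + ∑ p, ∑ q ∈ univ.filter (· < p), (ζ q / ζ p + ζ p / ζ q) * R p q ^ 2 := by
    rw [inv_diagonal_of_ne_zero fun p => (hζ p).ne', trace_diagonal_mul_mul_diagonal_mul]
    simpa only [Pi.inv_apply, inv_mul_eq_div, Fintype.card_fin] using
      hsymm.sum_weight_mul_mul_eq hdiag (w := fun p q => ζ q / ζ p) fun p => div_self (hζ p).ne'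
  have trace_sq : trace (R * R) = K + ∑ p, ∑ q ∈ univ.filter (· < p), 2 * R p q ^ 2 := by
    simpa only [trace, diag_apply, mul_apply, one_mul, Fintype.card_fin, one_add_one_eq_two] using
      hsymm.sum_weight_mul_mul_eq hdiag (w := fun _ _ => 1) fun _ => rfl
  refine ⟨trace_conj, ?_, trace_sq.symm⟩
  rw [trace_conj]
  gcongr with p _ q
  exact two_le_div_add_div (hζ q) (hζ p)

theorem trace_conj_correlation (K : ℕ) (hK : 0 < K)
    (ζ : Fin K → ℝ) (hζ : ∀ p, 0 < ζ p)
    (R : Matrix (Fin K) (Fin K) ℝ) (hsymm : R.IsSymm)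
    (hdiag : ∀ p, R p p = 1) :
    Matrix.trace ((Matrix.diagonal ζ)⁻¹ * R * Matrix.diagonal ζ * R) =
      (K : ℝ) + ∑ p, ∑ q ∈ Finset.univ.filter (fun q : Fin K => q < p),
        (ζ q / ζ p + ζ p / ζ q) * (R p q) ^ 2 ∧
    Matrix.trace ((Matrix.diagonal ζ)⁻¹ * R * Matrix.diagonal ζ * R) ≥
      (K : ℝ) + ∑ p, ∑ q ∈ Finset.univ.filter (fun q : Fin K => q < p),
        2 * (R p q) ^ 2 ∧
    (K : ℝ) + ∑ p, ∑ q ∈ Finset.univ.filter (fun q : Fin K => q < p),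
        2 * (R p q) ^ 2 = Matrix.trace (R * R) :=
  trace_conj_correlation_general K ζ hζ R hsymm hdiag
end

section
/- In the WBE design where all pairwise correlation coefficients equal ρ with ρ² = (N−τ)/((N−1)τ) (N = total users, τ < N), and power allocation P_k = α γ_k/(1+γ_k), the condition that all users meet their SINR targets, ∑_{p∈same-sequence group} γ_p/(1+γ_p) + (1/κ) ∑_{r∈other users} γ_r/(1+γ_r) ≤ 1 with κ = 1/ρ² = (N−1)τ/(N−τ), is implied by the per-group inequality ∑_{s=1}^{K} γ_s/(1+γ_s) ≤ κ/L + (1−κ)γ_q/(1+γ_q) together with ∑ γ/(1+γ) ≤ τ/L per cell. -/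
/-! Summing the per-group inequality over the `L` cells gives
`S ≤ κ + (1 - κ) T`, where `S` is the total load `∑ γ/(1+γ)` and `T` the load of the
same-sequence group of `q`. Since `κ > 0`, the interference from the other users is then
`(S - T) / κ ≤ 1 - T`, which is the SINR condition. -/

open Finset

theorem sub_one_mul_div_sub_pos {N τ : ℝ} (hτ : 1 ≤ τ) (hτN : τ < N) :
    0 < (N - 1) * τ / (N - τ) :=
  div_pos (mul_pos (by linarith) (by linarith)) (by linarith)

theorem sum_le_add_mul_sum_of_le_div_card {ι : Type*} [Fintype ι] [Nonempty ι]
    {f g : ι → ℝ} {c a : ℝ} (h : ∀ i, f i ≤ c / Fintype.card ι + a * g i) :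
    ∑ i, f i ≤ c + a * ∑ i, g i :=
  calc ∑ i, f i ≤ ∑ i, (c / Fintype.card ι + a * g i) := sum_le_sum fun i _ => h i
    _ = c + a * ∑ i, g i := by
      rw [sum_add_distrib, sum_const, card_univ, nsmul_eq_mul, mul_sum,
        mul_div_cancel₀ _ (by positivity)]

theorem add_one_div_mul_sub_le_one {κ S T : ℝ} (hκ : 0 < κ) (hS : S ≤ κ + (1 - κ) * T) :
    T + 1 / κ * (S - T) ≤ 1 :=
  calc T + 1 / κ * (S - T) ≤ T + 1 / κ * (κ * (1 - T)) := by gcongr; linarith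
    _ = 1 := by field_simp; ring

theorem wbe_sinr_condition_general (L K τ : ℕ) (hL : 0 < L) (hτ : 0 < τ) (hτK : τ < K)
    (N : ℕ) (hN : N = K * L)
    (κ : ℝ) (hκ : κ = ((N : ℝ) - 1) * τ / ((N : ℝ) - τ))
    (e : Fin L → Fin K → ℝ)
    (hgroup : ∀ l q, ∑ s, e l s ≤ κ / L + (1 - κ) * e l q) :
    ∀ q : Fin K, (∑ i, e i q) +
      (1 / κ) * (∑ r, ∑ s ∈ Finset.univ.filter (fun s : Fin K => s ≠ q), e r s) ≤ 1 := by
  intro q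
  have hτN : (τ : ℝ) < N := by
    exact_mod_cast hN ▸ hτK.trans_le (Nat.le_mul_of_pos_right K hL)
  have hκpos : 0 < κ := hκ ▸ sub_one_mul_div_sub_pos (by exact_mod_cast hτ) hτN
  have : Nonempty (Fin L) := Fin.pos_iff_nonempty.mp hL
  have hload : ∑ r, ∑ s, e r s ≤ κ + (1 - κ) * ∑ r, e r q :=
    sum_le_add_mul_sum_of_le_div_card fun l => by simpa using hgroup l q
  simp_rw [filter_ne', sum_erase_eq_sub (mem_univ q), sum_sub_distrib]
  exact add_one_div_mul_sub_le_one hκpos hload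

theorem wbe_sinr_condition (L K τ : ℕ) (hL : 0 < L) (hτ : 0 < τ) (hτK : τ < K)
    (γ : Fin L → Fin K → ℝ) (hpos : ∀ l k, 0 < γ l k)
    (N : ℕ) (hN : N = K * L)
    (κ : ℝ) (hκ : κ = ((N : ℝ) - 1) * τ / ((N : ℝ) - τ))
    (e : Fin L → Fin K → ℝ) (he : ∀ l k, e l k = γ l k / (1 + γ l k))
    (hcell : ∀ l, ∑ k, e l k ≤ (τ : ℝ) / L)
    (hgroup : ∀ l q, ∑ s, e l s ≤ κ / L + (1 - κ) * e l q) :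
    ∀ q : Fin K, (∑ i, e i q) +
      (1 / κ) * (∑ r, ∑ s ∈ Finset.univ.filter (fun s : Fin K => s ≠ q), e r s) ≤ 1 :=
  wbe_sinr_condition_general L K τ hL hτ hτK N hN κ hκ e hgroup
end

section
/- Let γ : Fin K → ℝ be positive reals with K > τ ≥ 1 and ∑_k γ_k/(1+γ_k) = τ/L for some L ≥ 1. If additionally each γ_k ≤ 1/(L−1) (for L ≥ 2), then each effective bandwidth γ_k/(1+γ_k) ≤ 1/L, and the flat vector with τ entries equal to 1/L and K−τ zeros majorizes the effective-bandwidth vector. -/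
open Finset

theorem gwbe_feasibility (K τ L : ℕ) (hτ : 1 ≤ τ) (hK : τ < K) (hL : 2 ≤ L)
    (γ : Fin K → ℝ) (hpos : ∀ k, 0 < γ k)
    (hdec : ∀ j k : Fin K, j ≤ k → γ k ≤ γ j)
    (hsum : ∑ k, γ k / (1 + γ k) = (τ : ℝ) / L)
    (hmax : ∀ k, γ k ≤ 1 / ((L : ℝ) - 1))
    (x : Fin K → ℝ)
    (hx : ∀ i : Fin K, x i = if (i : ℕ) < τ then (1 : ℝ) / L else 0) :
    (∀ k, γ k / (1 + γ k) ≤ 1 / (L : ℝ)) ∧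
    ((∀ m : ℕ, m < K →
        ∑ n ∈ Finset.univ.filter (fun n : Fin K => (n : ℕ) < m), γ n / (1 + γ n) ≤
          ∑ n ∈ Finset.univ.filter (fun n : Fin K => (n : ℕ) < m), x n) ∧
      ∑ n, x n = ∑ n, γ n / (1 + γ n)) := by
  have hL2 : (2:ℝ) ≤ (L:ℝ) := by exact_mod_cast hL
  have hLpos : (0:ℝ) < L := by linarith
  have hL1 : (0:ℝ) < (L:ℝ) - 1 := by linarith
  have heb : ∀ k, γ k / (1 + γ k) ≤ 1 / (L:ℝ) := by
    intro k
    have h1 : 0 < 1 + γ k := by linarith [hpos k]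
    have h2 : γ k * ((L:ℝ) - 1) ≤ 1 := by
      have := (le_div_iff₀ hL1).mp (hmax k)
      linarith
    rw [div_le_div_iff₀ h1 hLpos]
    nlinarith
  have hnn : ∀ k, 0 ≤ γ k / (1 + γ k) := by
    intro k
    have h1 : 0 < 1 + γ k := by linarith [hpos k]
    exact div_nonneg (hpos k).le h1.le
  -- cardinality of the prefix filters
  have hcard : ∀ m : ℕ, m ≤ K →
      (Finset.univ.filter (fun n : Fin K => (n : ℕ) < m)).card = m := by
    intro m hm
    rcases eq_or_lt_of_le hm with heq | hm'
    · rw [heq]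
      have : (Finset.univ.filter (fun n : Fin K => (n : ℕ) < K)) = Finset.univ := by
        apply Finset.filter_true_of_mem
        intro n _; exact n.isLt
      rw [this, Finset.card_univ, Fintype.card_fin]
    · have : (Finset.univ.filter (fun n : Fin K => (n : ℕ) < m)) = Finset.Iio ⟨m, hm'⟩ := by
        ext n; simp [Fin.lt_def]
      rw [this, Fin.card_Iio]
  -- sum of x over any prefix containing [0,τ)
  have hxτ : ∑ n ∈ Finset.univ.filter (fun n : Fin K => (n : ℕ) < τ), x n = (τ:ℝ)/L := by
    rw [Finset.sum_congr rfl (fun n hn => by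
      rw [hx n, if_pos]
      exact (Finset.mem_filter.mp hn).2)]
    rw [Finset.sum_const, hcard τ hK.le, nsmul_eq_mul]
    ring
  have hxsum : ∀ m : ℕ, τ ≤ m →
      ∑ n ∈ Finset.univ.filter (fun n : Fin K => (n : ℕ) < m), x n = (τ:ℝ)/L := by
    intro m hm
    rw [← hxτ]
    apply (Finset.sum_subset _ _).symm
    · intro n hn
      simp only [Finset.mem_filter, Finset.mem_univ, true_and] at hn ⊢
      omega
    · intro n _ hn
      simp only [Finset.mem_filter, Finset.mem_univ, true_and, not_lt] at hn
      rw [hx n, if_neg (by omega)]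
  refine ⟨heb, ?_, ?_⟩
  · intro m hm
    rcases le_or_gt m τ with hmτ | hmτ
    · -- all indices below m are below τ
      have hxm : ∑ n ∈ Finset.univ.filter (fun n : Fin K => (n : ℕ) < m), x n
          = (m:ℝ)/L := by
        rw [Finset.sum_congr rfl (fun n hn => by
          rw [hx n, if_pos]
          exact lt_of_lt_of_le (Finset.mem_filter.mp hn).2 hmτ)]
        rw [Finset.sum_const, hcard m hm.le, nsmul_eq_mul]
        ring
      rw [hxm]
      calc ∑ n ∈ Finset.univ.filter (fun n : Fin K => (n : ℕ) < m), γ n / (1 + γ n)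
          ≤ ∑ _n ∈ Finset.univ.filter (fun n : Fin K => (n : ℕ) < m), 1/(L:ℝ) :=
            Finset.sum_le_sum (fun n _ => heb n)
        _ = (m:ℝ)/L := by
            rw [Finset.sum_const, hcard m hm.le, nsmul_eq_mul]; ring
    · rw [hxsum m hmτ.le, ← hsum]
      exact Finset.sum_le_sum_of_subset_of_nonneg (Finset.subset_univ _)
        (fun n _ _ => hnn n)
  · have huniv : ∑ n, x n
        = ∑ n ∈ Finset.univ.filter (fun n : Fin K => (n : ℕ) < K), x n := by
      congr 1
      symm
      apply Finset.filter_true_of_mem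
      intro n _; exact n.isLt
    rw [huniv, hxsum K hK.le, hsum]
end
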